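/- The function G(z,t) = ψ_t(z) G_0(φ_t(z)) / cosh(t), where ψ_t(z) = 1/(1 - z tanh(t)) and φ_t(z) = (z - tanh(t))/(1 - z tanh(t)), satisfies the PDE ∂G/∂t = (z² - 1) ∂G/∂z + z G with G(z,0) = G_0(z), whenever G_0 is analytic at φ_t(z) and 1 - z tanh(t) ≠ 0. -/

import Mathlib

open Complex

/-! With `τ = tanh t` we have `G(z,t) = F(τ,z) / cosh t` for
`F(τ,z) = ψ G₀(φ) = mobiusPullback G₀ τ z`. Since
`dτ/dt = 1 - τ²` and `d(1/cosh t)/dt = -τ / cosh t`, the PDE becomes the identity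
`(1 - τ²) ∂_τ F - τ F = (z² - 1) ∂_z F + z F`. By the chain rule its `G₀'` terms agree because
`(1 - τ²) ∂_τ φ = (z² - 1) ∂_z φ`; what is left is an identity of rational functions. -/

section
variable {𝕜 : Type*} [Field 𝕜]

def mobius (τ z : 𝕜) : 𝕜 := (z - τ) / (1 - z * τ)

def mobiusPullback (G₀ : 𝕜 → 𝕜) (τ z : 𝕜) : 𝕜 := 1 / (1 - z * τ) * G₀ (mobius τ z)

end

theorem Real.hasDerivAt_tanh (t : ℝ) : HasDerivAt Real.tanh (1 - Real.tanh t ^ 2) t := by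
  have hc : Real.cosh t ≠ 0 := (Real.cosh_pos t).ne'
  have h := (Real.hasDerivAt_sinh t).div (Real.hasDerivAt_cosh t) hc
  rw [show Real.sinh / Real.cosh = Real.tanh from
    funext fun s => (Real.tanh_eq_sinh_div_cosh s).symm] at h
  refine h.congr_deriv ?_
  rw [Real.tanh_eq_sinh_div_cosh]
  field_simp

theorem HasDerivAt.comp_tanh_div_cosh {F : ℂ → ℂ} {F' : ℂ} {t : ℝ}
    (hF : HasDerivAt F F' (Real.tanh t)) :
    HasDerivAt (fun s : ℝ => F (Real.tanh s) / Real.cosh s)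
      (((1 - Real.tanh t ^ 2) * F' - Real.tanh t * F (Real.tanh t)) / Real.cosh t) t := by
  have hc : (Real.cosh t : ℂ) ≠ 0 := ofReal_ne_zero.mpr (Real.cosh_pos t).ne'
  have hsinh : (Real.sinh t : ℂ) = Real.tanh t * Real.cosh t := by
    rw [Real.tanh_eq_sinh_div_cosh, ofReal_div]; field_simp
  refine ((hF.comp t (Real.hasDerivAt_tanh t).ofReal_comp).div
    (Real.hasDerivAt_cosh t).ofReal_comp hc).congr_deriv ?_
  rw [hsinh, Function.comp_apply]
  push_cast
  field_simp

section
variable {𝕜 : Type*} [NontriviallyNormedField 𝕜] {G₀ : 𝕜 → 𝕜} {τ z : 𝕜}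

theorem hasDerivAt_mobius (hz : 1 - z * τ ≠ 0) :
    HasDerivAt (mobius τ) ((1 - τ ^ 2) / (1 - z * τ) ^ 2) z := by
  refine (((hasDerivAt_id z).sub_const τ).div
    (((hasDerivAt_id z).mul_const τ).const_sub 1) hz).congr_deriv ?_
  simp only [id]; ring

theorem hasDerivAt_mobius_param (hz : 1 - z * τ ≠ 0) :
    HasDerivAt (fun σ => mobius σ z) ((z ^ 2 - 1) / (1 - z * τ) ^ 2) τ := by
  refine (((hasDerivAt_id τ).const_sub z).div
    (((hasDerivAt_id τ).const_mul z).const_sub 1) hz).congr_deriv ?_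
  simp only [id]; ring

theorem hasDerivAt_mobiusPullback (hG₀ : DifferentiableAt 𝕜 G₀ (mobius τ z))
    (hz : 1 - z * τ ≠ 0) :
    HasDerivAt (mobiusPullback G₀ τ)
      (τ / (1 - z * τ) ^ 2 * G₀ (mobius τ z) +
        1 / (1 - z * τ) * (deriv G₀ (mobius τ z) * ((1 - τ ^ 2) / (1 - z * τ) ^ 2))) z := by
  have hψ : HasDerivAt (fun w => 1 / (1 - w * τ)) (τ / (1 - z * τ) ^ 2) z := by
    refine ((hasDerivAt_const z 1).div
      (((hasDerivAt_id z).mul_const τ).const_sub 1) hz).congr_deriv ?_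
    simp only [id]; ring
  exact hψ.mul (hG₀.hasDerivAt.comp z (hasDerivAt_mobius hz))

theorem hasDerivAt_mobiusPullback_param (hG₀ : DifferentiableAt 𝕜 G₀ (mobius τ z))
    (hz : 1 - z * τ ≠ 0) :
    HasDerivAt (fun σ => mobiusPullback G₀ σ z)
      (z / (1 - z * τ) ^ 2 * G₀ (mobius τ z) +
        1 / (1 - z * τ) * (deriv G₀ (mobius τ z) * ((z ^ 2 - 1) / (1 - z * τ) ^ 2))) τ := by
  have hψ : HasDerivAt (fun σ => 1 / (1 - z * σ)) (z / (1 - z * τ) ^ 2) τ := by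
    refine ((hasDerivAt_const τ 1).div
      (((hasDerivAt_id τ).const_mul z).const_sub 1) hz).congr_deriv ?_
    simp only [id]; ring
  exact hψ.mul (hG₀.hasDerivAt.comp τ (hasDerivAt_mobius_param hz))

theorem mobiusPullback_transport (hG₀ : DifferentiableAt 𝕜 G₀ (mobius τ z))
    (hz : 1 - z * τ ≠ 0) :
    (1 - τ ^ 2) * deriv (fun σ => mobiusPullback G₀ σ z) τ - τ * mobiusPullback G₀ τ z =
      (z ^ 2 - 1) * deriv (mobiusPullback G₀ τ) z + z * mobiusPullback G₀ τ z := by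
  rw [(hasDerivAt_mobiusPullback hG₀ hz).deriv, (hasDerivAt_mobiusPullback_param hG₀ hz).deriv,
    mobiusPullback]
  field_simp
  ring

end

/-- `G(z,t) = ψ_t(z) G₀(φ_t(z)) / cosh t`, with `ψ_t(z) = 1/(1 - z tanh t)` and
`φ_t(z) = (z - tanh t)/(1 - z tanh t)`, satisfies the generating-function PDE
`∂G/∂t = (z² - 1) ∂G/∂z + z G` with `G(z,0) = G₀(z)`, whenever `G₀` is analytic at
`φ_t(z)` and `1 - z tanh t ≠ 0`. -/
theorem stmt8 (G₀ : ℂ → ℂ) (G : ℂ → ℝ → ℂ)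
    (hG : ∀ (z : ℂ) (t : ℝ),
      G z t = (1 / (1 - z * Real.tanh t)) *
        G₀ ((z - Real.tanh t) / (1 - z * Real.tanh t)) / Real.cosh t)
    (z : ℂ) (t : ℝ)
    (hden : 1 - z * Real.tanh t ≠ 0)
    (hG₀ : AnalyticAt ℂ G₀ ((z - Real.tanh t) / (1 - z * Real.tanh t))) :
    HasDerivAt (fun s : ℝ => G z s)
      ((z ^ 2 - 1) * deriv (fun w : ℂ => G w t) z + z * G z t) t ∧
    G z 0 = G₀ z := by
  have hG_time : (fun s : ℝ => G z s) =
      fun s => mobiusPullback G₀ (Real.tanh s) z / Real.cosh s :=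
    funext fun s => hG z s
  have hG_space : (fun w : ℂ => G w t) =
      fun w => mobiusPullback G₀ (Real.tanh t) w / Real.cosh t :=
    funext fun w => hG w t
  have hG₀' : DifferentiableAt ℂ G₀ (mobius (Real.tanh t) z) := hG₀.differentiableAt
  have hτ := (hasDerivAt_mobiusPullback_param hG₀' hden).differentiableAt.hasDerivAt
  refine ⟨?_, by simp [hG]⟩
  rw [hG_time, hG_space, deriv_div_const, congrFun hG_time t]
  refine hτ.comp_tanh_div_cosh.congr_deriv ?_
  rw [mobiusPullback_transport hG₀' hden]
  ring
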